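/- Let G be the graph of the standard tessellation of ℝ^n (vertices ℤ^n, with x ~ y iff x ≠ y and 0 ≤ min_i(y_i − x_i) ≤ max_i(y_i − x_i) = 1) and Ω a nonempty finite subset of ℤ^n. With unit weights on Ω̃, the Steklov eigenvalues satisfy λ_1(T^{(0)}) + ... + λ_n(T^{(0)}) ≤ n·2^{n−1}|∂Ω| / min_{1≤i≤n} |E_i(Ω̃)|. -/

import Mathlib

open scoped Classical

namespace GraphHodge


/-- The graph of the standard tessellation of `ℝⁿ`: vertices `ℤⁿ`, with `x ~ y` iff
`x ≠ y` and all coordinate differences (in one common direction) lie in `{0, 1}`. -/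
def tessGraph (n : ℕ) : SimpleGraph (Fin n → ℤ) where
  Adj x y := x ≠ y ∧
    ((∀ i, y i - x i = 0 ∨ y i - x i = 1) ∨ (∀ i, x i - y i = 0 ∨ x i - y i = 1))
  symm := ⟨fun x y h => ⟨h.1.symm, h.2.symm⟩⟩
  loopless := ⟨fun x h => h.1 rfl⟩

/-- The `{0,1}`-vector of a subset `J ⊆ {1,…,n}`: `e_J = ∑_{i ∈ J} e_i`. -/
def eJ (n : ℕ) (J : Finset (Fin n)) : Fin n → ℤ := fun i => if i ∈ J then 1 else 0

/-- The normal derivative (unit weight) of `f` at a boundary vertex `v` of `Ω̃` in the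
tessellation graph. -/
noncomputable def tessN (n : ℕ) (Ω : Finset (Fin n → ℤ)) (f : (Fin n → ℤ) → ℝ)
    (v : Fin n → ℤ) : ℝ :=
  ∑ J : Finset (Fin n),
    ((if v + eJ n J ∈ Ω then f v - f (v + eJ n J) else 0) +
     (if v - eJ n J ∈ Ω then f v - f (v - eJ n J) else 0))

/-- The set `E_i(Ω̃)` of edges of `Ω̃` parallel to `e_i`, encoded by lower endpoints. -/
def tessEi (n : ℕ) (Ω : Finset (Fin n → ℤ)) (i : Fin n) : Finset (Fin n → ℤ) :=
  Ω ∪ Ω.image (fun x => x - eJ n {i})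

/-- `|∂Ω|`: the number of edges of the tessellation graph between `Ω` and its vertex
boundary, counted from their `Ω`-endpoints. -/
def tessBdryEdges (n : ℕ) (Ω : Finset (Fin n → ℤ)) : ℕ :=
  ∑ x ∈ Ω, ∑ J : Finset (Fin n),
    ((if x + eJ n J ∉ Ω then 1 else 0) + (if x - eJ n J ∉ Ω then 1 else 0))

/-! ### Infrastructure -/

section Infra
variable {n : ℕ} (Ω bd : Finset (Fin n → ℤ))

/-- edges of `Ω̃` in direction `J`, encoded by lower endpoints. -/
noncomputable def BJ (J : Finset (Fin n)) : Finset (Fin n → ℤ) :=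
  Ω ∪ Ω.image (fun x => x - eJ n J)

lemma tessEi_eq (i : Fin n) : tessEi n Ω i = BJ Ω {i} := rfl

lemma mem_BJ {J : Finset (Fin n)} {x : Fin n → ℤ} :
    x ∈ BJ Ω J ↔ x ∈ Ω ∨ x + eJ n J ∈ Ω := by
  unfold BJ
  simp only [Finset.mem_union, Finset.mem_image]
  constructor
  · rintro (h | ⟨y, hy, rfl⟩)
    · exact Or.inl h
    · exact Or.inr (by simpa [sub_add_cancel] using hy)
  · rintro (h | h)
    · exact Or.inl h
    · exact Or.inr ⟨x + eJ n J, h, by simp [add_sub_cancel_right]⟩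

lemma eJ_empty : eJ n (∅ : Finset (Fin n)) = 0 := by
  funext i; simp [eJ]

variable (hbd : ∀ x, x ∈ bd ↔ x ∉ Ω ∧ ∃ y ∈ Ω, (tessGraph n).Adj x y)

include hbd in
lemma mem_bd_up {J : Finset (Fin n)} (hJ : J.Nonempty) {x : Fin n → ℤ}
    (h1 : x + eJ n J ∈ Ω) (h2 : x ∉ Ω) : x ∈ bd := by
  obtain ⟨i, hi⟩ := hJ
  refine (hbd x).2 ⟨h2, x + eJ n J, h1, show x ≠ x + eJ n J ∧ ((∀ i, (x + eJ n J) i - x i = 0 ∨ (x + eJ n J) i - x i = 1) ∨ (∀ i, x i - (x + eJ n J) i = 0 ∨ x i - (x + eJ n J) i = 1)) from ⟨?_, Or.inl fun i' => ?_⟩⟩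
  · intro h
    have := congrFun h i
    simp [eJ, hi] at this
  · by_cases hi' : i' ∈ J <;> simp [eJ, hi']

include hbd in
lemma mem_bd_down {J : Finset (Fin n)} (hJ : J.Nonempty) {x : Fin n → ℤ}
    (h1 : x - eJ n J ∈ Ω) (h2 : x ∉ Ω) : x ∈ bd := by
  obtain ⟨i, hi⟩ := hJ
  refine (hbd x).2 ⟨h2, x - eJ n J, h1, show x ≠ x - eJ n J ∧ ((∀ i, (x - eJ n J) i - x i = 0 ∨ (x - eJ n J) i - x i = 1) ∨ (∀ i, x i - (x - eJ n J) i = 0 ∨ x i - (x - eJ n J) i = 1)) from ⟨?_, Or.inr fun i' => ?_⟩⟩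
  · intro h
    have := congrFun h i
    simp [eJ, hi] at this
    omega
  · by_cases hi' : i' ∈ J <;> simp [eJ, hi']

include hbd in
lemma bd_not_mem {v : Fin n → ℤ} (hv : v ∈ bd) : v ∉ Ω := ((hbd v).1 hv).1

/-! ### The Dirichlet energy form and Green's identity -/

/-- Dirichlet energy form on `Ω̃`. -/
noncomputable def EE (f g : (Fin n → ℤ) → ℝ) : ℝ :=
  ∑ J : Finset (Fin n), ∑ x ∈ BJ Ω J, (f (x + eJ n J) - f x) * (g (x + eJ n J) - g x)

include hbd in
lemma BJ_sdiff {J : Finset (Fin n)} (hJ : J.Nonempty) :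
    BJ Ω J \ Ω = bd.filter (fun v => v + eJ n J ∈ Ω) := by
  ext v
  simp only [Finset.mem_sdiff, mem_BJ, Finset.mem_filter]
  constructor
  · rintro ⟨h | h, hv⟩
    · exact absurd h hv
    · exact ⟨mem_bd_up Ω bd hbd hJ h hv, h⟩
  · rintro ⟨hv, h⟩
    exact ⟨Or.inr h, bd_not_mem Ω bd hbd hv⟩

lemma mem_BJ_image {J : Finset (Fin n)} {y : Fin n → ℤ} :
    y ∈ (BJ Ω J).image (fun x => x + eJ n J) ↔ y - eJ n J ∈ Ω ∨ y ∈ Ω := by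
  simp only [Finset.mem_image]
  constructor
  · rintro ⟨x, hx, rfl⟩
    rw [mem_BJ] at hx
    rcases hx with h | h
    · exact Or.inl (by simpa [add_sub_cancel_right] using h)
    · exact Or.inr h
  · rintro (h | h)
    · exact ⟨y - eJ n J, (mem_BJ Ω).2 (Or.inl h), by simp [sub_add_cancel]⟩
    · exact ⟨y - eJ n J, (mem_BJ Ω).2 (Or.inr (by simpa [sub_add_cancel] using h)),
        by simp [sub_add_cancel]⟩

include hbd in
lemma BJ_image_sdiff {J : Finset (Fin n)} (hJ : J.Nonempty) :
    (BJ Ω J).image (fun x => x + eJ n J) \ Ω = bd.filter (fun v => v - eJ n J ∈ Ω) := by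
  ext y
  simp only [Finset.mem_sdiff, mem_BJ_image, Finset.mem_filter]
  constructor
  · rintro ⟨h | h, hy⟩
    · exact ⟨mem_bd_down Ω bd hbd hJ h hy, h⟩
    · exact absurd h hy
  · rintro ⟨hy, h⟩
    exact ⟨Or.inl h, bd_not_mem Ω bd hbd hy⟩

lemma Omega_subset_BJ {J : Finset (Fin n)} : Ω ⊆ BJ Ω J := Finset.subset_union_left

lemma Omega_subset_BJ_image {J : Finset (Fin n)} :
    Ω ⊆ (BJ Ω J).image (fun x => x + eJ n J) := by
  intro y hy
  exact (mem_BJ_image Ω).2 (Or.inr hy)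

include hbd in
lemma greenJ (f g : (Fin n → ℤ) → ℝ) (J : Finset (Fin n)) :
    ∑ x ∈ BJ Ω J, (f (x + eJ n J) - f x) * (g (x + eJ n J) - g x)
    = ∑ x ∈ Ω, g x * ((f x - f (x + eJ n J)) + (f x - f (x - eJ n J)))
      + ∑ v ∈ bd, g v * ((if v + eJ n J ∈ Ω then f v - f (v + eJ n J) else 0)
          + (if v - eJ n J ∈ Ω then f v - f (v - eJ n J) else 0)) := by
  rcases J.eq_empty_or_nonempty with rfl | hJ
  · simp [eJ_empty, sub_self]
  · have T2 : ∑ x ∈ BJ Ω J, g x * (f (x + eJ n J) - f x)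
        = ∑ x ∈ Ω, g x * (f (x + eJ n J) - f x)
          + ∑ v ∈ bd, (if v + eJ n J ∈ Ω then g v * (f (v + eJ n J) - f v) else 0) := by
      rw [← Finset.sum_sdiff (Omega_subset_BJ Ω (J := J)), BJ_sdiff Ω bd hbd hJ,
        Finset.sum_filter, add_comm]
    have hinj : ∀ x ∈ BJ Ω J, ∀ y ∈ BJ Ω J,
        x + eJ n J = y + eJ n J → x = y := fun x _ y _ h => by
      exact add_right_cancel h
    have T1 : ∑ x ∈ BJ Ω J, g (x + eJ n J) * (f (x + eJ n J) - f x)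
        = ∑ x ∈ Ω, g x * (f x - f (x - eJ n J))
          + ∑ v ∈ bd, (if v - eJ n J ∈ Ω then g v * (f v - f (v - eJ n J)) else 0) := by
      have e1 : ∑ x ∈ BJ Ω J, g (x + eJ n J) * (f (x + eJ n J) - f x)
          = ∑ y ∈ (BJ Ω J).image (fun x => x + eJ n J), g y * (f y - f (y - eJ n J)) := by
        rw [Finset.sum_image hinj]
        exact Finset.sum_congr rfl fun x _ => by rw [add_sub_cancel_right]
      rw [e1, ← Finset.sum_sdiff (Omega_subset_BJ_image Ω (J := J)),
        BJ_image_sdiff Ω bd hbd hJ, Finset.sum_filter, add_comm]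
    have expand : ∑ x ∈ BJ Ω J, (f (x + eJ n J) - f x) * (g (x + eJ n J) - g x)
        = (∑ x ∈ BJ Ω J, g (x + eJ n J) * (f (x + eJ n J) - f x))
          - ∑ x ∈ BJ Ω J, g x * (f (x + eJ n J) - f x) := by
      rw [← Finset.sum_sub_distrib]
      exact Finset.sum_congr rfl fun x _ => by ring
    have RΩ : ∑ x ∈ Ω, g x * ((f x - f (x + eJ n J)) + (f x - f (x - eJ n J)))
        = (∑ x ∈ Ω, g x * (f x - f (x - eJ n J)))
          - ∑ x ∈ Ω, g x * (f (x + eJ n J) - f x) := by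
      rw [← Finset.sum_sub_distrib]
      exact Finset.sum_congr rfl fun x _ => by ring
    have Rbd : ∑ v ∈ bd, g v * ((if v + eJ n J ∈ Ω then f v - f (v + eJ n J) else 0)
          + (if v - eJ n J ∈ Ω then f v - f (v - eJ n J) else 0))
        = (∑ v ∈ bd, (if v - eJ n J ∈ Ω then g v * (f v - f (v - eJ n J)) else 0))
          - ∑ v ∈ bd, (if v + eJ n J ∈ Ω then g v * (f (v + eJ n J) - f v) else 0) := by
      rw [← Finset.sum_sub_distrib]
      refine Finset.sum_congr rfl fun v _ => ?_
      by_cases h1 : v + eJ n J ∈ Ω <;> by_cases h2 : v - eJ n J ∈ Ω <;>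
        simp [h1, h2] <;> ring
    rw [expand, T1, T2, RΩ, Rbd]
    ring

include hbd in
lemma green (f g : (Fin n → ℤ) → ℝ) :
    EE Ω f g = ∑ x ∈ Ω, g x * (∑ J : Finset (Fin n),
        (2 * f x - f (x + eJ n J) - f (x - eJ n J)))
      + ∑ v ∈ bd, g v * tessN n Ω f v := by
  unfold EE tessN
  rw [Finset.sum_congr rfl fun J _ => greenJ Ω bd hbd f g J]
  rw [Finset.sum_add_distrib]
  congr 1
  · rw [Finset.sum_comm]
    refine Finset.sum_congr rfl fun x _ => ?_
    rw [← Finset.mul_sum]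
    congr 1
    exact Finset.sum_congr rfl fun J _ => by ring
  · rw [Finset.sum_comm]
    refine Finset.sum_congr rfl fun v _ => ?_
    rw [← Finset.mul_sum]

lemma diff_eq_of_EE_self_eq_zero (f : (Fin n → ℤ) → ℝ) (h : EE Ω f f = 0) :
    ∀ J : Finset (Fin n), ∀ x ∈ BJ Ω J, f (x + eJ n J) = f x := by
  have h1 := (Finset.sum_eq_zero_iff_of_nonneg
    (fun J _ => Finset.sum_nonneg fun x _ => mul_self_nonneg _)).1 h
  intro J x hx
  have h2 := (Finset.sum_eq_zero_iff_of_nonneg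
    (fun x _ => mul_self_nonneg _)).1 (h1 J (Finset.mem_univ J)) x hx
  have := mul_self_eq_zero.1 h2
  linarith [this]

/-! ### Coordinate functions, locally constant functions, projection -/

/-- coordinate function -/
def Xc (i : Fin n) : (Fin n → ℤ) → ℝ := fun x => (x i : ℝ)

lemma Xc_diff (i : Fin n) (J : Finset (Fin n)) (x : Fin n → ℤ) :
    Xc i (x + eJ n J) = Xc i x + (if i ∈ J then 1 else 0) := by
  unfold Xc eJ
  by_cases hi : i ∈ J <;> simp [hi]

/-- the submodule of functions that are constant along all edges of `Ω̃`. -/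
def LCsub : Submodule ℝ ((Fin n → ℤ) → ℝ) where
  carrier := {f | ∀ J : Finset (Fin n), ∀ x ∈ BJ Ω J, f (x + eJ n J) = f x}
  add_mem' := by
    intro a b ha hb J x hx
    simp only [Pi.add_apply, ha J x hx, hb J x hx]
  zero_mem' := by intro J x hx; rfl
  smul_mem' := by
    intro c a ha J x hx
    simp only [Pi.smul_apply, ha J x hx]

lemma mem_LCsub {f : (Fin n → ℤ) → ℝ} :
    f ∈ LCsub Ω ↔ ∀ J : Finset (Fin n), ∀ x ∈ BJ Ω J, f (x + eJ n J) = f x := Iff.rfl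

/-- restriction to the boundary as a linear map into a Euclidean space -/
noncomputable def trL : ((Fin n → ℤ) → ℝ) →ₗ[ℝ] EuclideanSpace ℝ {v : Fin n → ℤ // v ∈ bd} where
  toFun f := WithLp.toLp 2 (fun v : {v : Fin n → ℤ // v ∈ bd} => f v.1)
  map_add' _ _ := rfl
  map_smul' _ _ := rfl

lemma inner_trL (a b : (Fin n → ℤ) → ℝ) :
    (inner ℝ (trL bd a) (trL bd b) : ℝ) = ∑ v ∈ bd, a v * b v := by
  rw [PiLp.inner_apply]
  rw [← Finset.sum_coe_sort bd (fun v => a v * b v)]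
  refine Finset.sum_congr rfl fun v _ => ?_
  simp [trL, RCLike.inner_apply, starRingEnd_apply, LinearMap.coe_mk, AddHom.coe_mk, mul_comm]
  rfl

set_option synthInstance.maxHeartbeats 1000000 in
lemma exists_f0 : ∃ f0 : Fin n → ((Fin n → ℤ) → ℝ),
    ∀ i, (f0 i ∈ LCsub Ω) ∧
      ∀ g ∈ LCsub Ω, ∑ v ∈ bd, (Xc i v - f0 i v) * g v = 0 := by
  have H : ∀ i : Fin n, ∃ f0i, f0i ∈ LCsub Ω ∧
      ∀ g ∈ LCsub Ω, ∑ v ∈ bd, (Xc i v - f0i v) * g v = 0 := by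
    intro i
    set K := (LCsub Ω).map (trL bd) with hK
    obtain ⟨y, hyK, z, hz, hv⟩ := K.exists_add_mem_mem_orthogonal (trL bd (Xc i))
    rw [hK, Submodule.mem_map] at hyK
    obtain ⟨f0i, hf0, hf0y⟩ := hyK
    refine ⟨f0i, hf0, fun g hg => ?_⟩
    have hzeq : z = trL bd (Xc i - f0i) := by
      rw [map_sub, hf0y]
      rw [hv]
      abel
    have hgK : trL bd g ∈ K := Submodule.mem_map_of_mem hg
    have h0 : (inner ℝ (trL bd g) z : ℝ) = 0 := (Submodule.mem_orthogonal K z).1 hz _ hgK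
    rw [hzeq] at h0
    have h1 : ∑ v ∈ bd, (Xc i - f0i) v * g v = 0 := by
      rw [← inner_trL bd (Xc i - f0i) g, real_inner_comm]
      exact h0
    simpa [Pi.sub_apply] using h1
  choose f0 h using H
  exact ⟨f0, h⟩

/-- the test function -/
noncomputable def uhat (f0 : Fin n → ((Fin n → ℤ) → ℝ)) (t : Fin n → ℝ) :
    (Fin n → ℤ) → ℝ := fun v => ∑ i, t i * (Xc i v - f0 i v)

lemma uhat_diff {f0 : Fin n → ((Fin n → ℤ) → ℝ)} (hf0 : ∀ i, f0 i ∈ LCsub Ω)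
    (t : Fin n → ℝ) {J : Finset (Fin n)} {x : Fin n → ℤ} (hx : x ∈ BJ Ω J) :
    uhat f0 t (x + eJ n J) = uhat f0 t x + ∑ i ∈ J, t i := by
  unfold uhat
  have key : ∀ i : Fin n, t i * (Xc i (x + eJ n J) - f0 i (x + eJ n J))
      = t i * (Xc i x - f0 i x) + (if i ∈ J then t i else 0) := by
    intro i
    rw [Xc_diff, hf0 i J x hx]
    by_cases hi : i ∈ J <;> simp [hi] <;> ring
  rw [Finset.sum_congr rfl fun i _ => key i, Finset.sum_add_distrib,
    Finset.sum_ite_mem, Finset.univ_inter]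

lemma uhat_diff_down {f0 : Fin n → ((Fin n → ℤ) → ℝ)} (hf0 : ∀ i, f0 i ∈ LCsub Ω)
    (t : Fin n → ℝ) {J : Finset (Fin n)} {x : Fin n → ℤ} (hx : x ∈ Ω) :
    uhat f0 t (x - eJ n J) = uhat f0 t x - ∑ i ∈ J, t i := by
  have hx' : x - eJ n J ∈ BJ Ω J := (mem_BJ Ω).2 (Or.inr (by simpa [sub_add_cancel] using hx))
  have := uhat_diff Ω hf0 t hx'
  rw [sub_add_cancel] at this
  rw [this]
  ring

lemma uhat_harmonic {f0 : Fin n → ((Fin n → ℤ) → ℝ)} (hf0 : ∀ i, f0 i ∈ LCsub Ω)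
    (t : Fin n → ℝ) : ∀ x ∈ Ω, (∑ J : Finset (Fin n),
      (2 * uhat f0 t x - uhat f0 t (x + eJ n J) - uhat f0 t (x - eJ n J))) = 0 := by
  intro x hx
  apply Finset.sum_eq_zero
  intro J _
  rw [uhat_diff Ω hf0 t (Omega_subset_BJ Ω hx), uhat_diff_down Ω hf0 t hx]
  ring

/-- linearity of the Laplacian row sum under finite combinations -/
lemma lapsum_sum {N : ℕ} (c : Fin N → ℝ) (Fj : Fin N → ((Fin n → ℤ) → ℝ)) (x : Fin n → ℤ) :
    (∑ J : Finset (Fin n), (2 * (∑ j, c j * Fj j x) - (∑ j, c j * Fj j (x + eJ n J))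
        - (∑ j, c j * Fj j (x - eJ n J))))
    = ∑ j, c j * ∑ J : Finset (Fin n),
        (2 * Fj j x - Fj j (x + eJ n J) - Fj j (x - eJ n J)) := by
  have key : ∀ J : Finset (Fin n), (2 * (∑ j, c j * Fj j x) - (∑ j, c j * Fj j (x + eJ n J))
      - (∑ j, c j * Fj j (x - eJ n J)))
      = ∑ j, c j * (2 * Fj j x - Fj j (x + eJ n J) - Fj j (x - eJ n J)) := by
    intro J
    rw [Finset.mul_sum, ← Finset.sum_sub_distrib, ← Finset.sum_sub_distrib]
    exact Finset.sum_congr rfl fun j _ => by ring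
  rw [Finset.sum_congr rfl fun J _ => key J, Finset.sum_comm]
  exact Finset.sum_congr rfl fun j _ => (Finset.mul_sum _ _ _).symm

lemma lapsum_sub (f g : (Fin n → ℤ) → ℝ) (x : Fin n → ℤ) :
    (∑ J : Finset (Fin n), (2 * (f x - g x) - (f (x + eJ n J) - g (x + eJ n J))
        - (f (x - eJ n J) - g (x - eJ n J))))
    = (∑ J : Finset (Fin n), (2 * f x - f (x + eJ n J) - f (x - eJ n J)))
      - ∑ J : Finset (Fin n), (2 * g x - g (x + eJ n J) - g (x - eJ n J)) := by
  rw [← Finset.sum_sub_distrib]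
  exact Finset.sum_congr rfl fun J _ => by ring

lemma tessN_sum {N : ℕ} (c : Fin N → ℝ) (Fj : Fin N → ((Fin n → ℤ) → ℝ)) (v : Fin n → ℤ) :
    tessN n Ω (fun w => ∑ j, c j * Fj j w) v = ∑ j, c j * tessN n Ω (Fj j) v := by
  unfold tessN
  simp only [Finset.mul_sum]
  rw [Finset.sum_comm]
  refine Finset.sum_congr rfl fun J _ => ?_
  by_cases h1 : v + eJ n J ∈ Ω <;> by_cases h2 : v - eJ n J ∈ Ω <;>
    simp [h1, h2, Finset.mul_sum, mul_add, mul_sub, Finset.sum_add_distrib,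
      ← Finset.sum_sub_distrib]

/-! ### The core telescoping estimate -/

/-- boundary edges in direction `J`, counted as a number -/
noncomputable def bdJcard (J : Finset (Fin n)) : ℕ :=
  (Ω.filter (fun x => x + eJ n J ∉ Ω)).card + (Ω.filter (fun x => x - eJ n J ∉ Ω)).card

lemma sum_bdJcard : ∑ J : Finset (Fin n), bdJcard Ω J = tessBdryEdges n Ω := by
  unfold tessBdryEdges bdJcard
  rw [Finset.sum_comm]
  refine Finset.sum_congr rfl fun J _ => ?_
  rw [Finset.sum_add_distrib, Finset.card_filter, Finset.card_filter]

/-- The core telescoping estimate. -/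
lemma core_estimate (hbd : ∀ x, x ∈ bd ↔ x ∉ Ω ∧ ∃ y ∈ Ω, (tessGraph n).Adj x y)
    {J : Finset (Fin n)} (hJ : J.Nonempty) (u : (Fin n → ℤ) → ℝ) (s : ℝ)
    (hd : ∀ x ∈ BJ Ω J, u (x + eJ n J) = u x + s) :
    (((BJ Ω J).card : ℝ) * s)^2 ≤ (bdJcard Ω J : ℝ) * ∑ v ∈ bd, (u v)^2 := by
  set e := eJ n J with he
  set B := BJ Ω J with hB
  set img := B.image (fun x => x + e) with himg
  set U := img \ B with hU
  set L := B \ img with hL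
  have hinj : ∀ x ∈ B, ∀ y ∈ B, x + e = y + e → x = y := fun x _ y _ h => add_right_cancel h
  have tel : (B.card : ℝ) * s = ∑ y ∈ U, u y - ∑ x ∈ L, u x := by
    have t1 : ∑ x ∈ B, (u (x + e) - u x) = (B.card : ℝ) * s := by
      rw [Finset.sum_congr rfl (fun x hx => show u (x + e) - u x = s by rw [hd x hx]; ring)]
      rw [Finset.sum_const, nsmul_eq_mul]
    have t2 : ∑ x ∈ B, u (x + e) = ∑ y ∈ img, u y := (Finset.sum_image hinj).symm
    have t3 : ∑ y ∈ img, u y = ∑ y ∈ img ∩ B, u y + ∑ y ∈ U, u y :=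
      (Finset.sum_inter_add_sum_sdiff img B u).symm
    have t4 : ∑ x ∈ B, u x = ∑ y ∈ img ∩ B, u y + ∑ x ∈ L, u x := by
      rw [Finset.inter_comm]
      exact (Finset.sum_inter_add_sum_sdiff B img u).symm
    rw [← t1, Finset.sum_sub_distrib, t2, t3, t4]
    ring
  have hUmem : ∀ y ∈ U, y ∉ Ω ∧ y - e ∈ Ω := by
    intro y hy
    rw [hU, Finset.mem_sdiff] at hy
    obtain ⟨h1, h2⟩ := hy
    rw [himg, hB, mem_BJ_image Ω] at h1
    rw [hB, mem_BJ Ω] at h2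
    push_neg at h2
    exact ⟨h2.1, h1.resolve_right h2.1⟩
  have hLmem : ∀ x ∈ L, x ∉ Ω ∧ x + e ∈ Ω := by
    intro x hx
    rw [hL, Finset.mem_sdiff] at hx
    obtain ⟨h1, h2⟩ := hx
    rw [himg, hB, mem_BJ_image Ω] at h2
    rw [hB, mem_BJ Ω] at h1
    push_neg at h2
    exact ⟨h2.2, h1.resolve_left h2.2⟩
  have hUbd : U ⊆ bd := fun y hy => mem_bd_down Ω bd hbd hJ (hUmem y hy).2 (hUmem y hy).1
  have hLbd : L ⊆ bd := fun x hx => mem_bd_up Ω bd hbd hJ (hLmem x hx).2 (hLmem x hx).1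
  have hdisj : Disjoint U L := by
    rw [Finset.disjoint_left]
    intro a haU haL
    rw [hU, Finset.mem_sdiff] at haU
    rw [hL, Finset.mem_sdiff] at haL
    exact haU.2 haL.1
  have hUcard : U.card ≤ (Ω.filter (fun x => x + e ∉ Ω)).card := by
    apply Finset.card_le_card_of_injOn (fun y => y - e)
    · intro y hy
      rw [Finset.mem_coe, Finset.mem_filter]
      refine ⟨(hUmem y hy).2, by rw [sub_add_cancel]; exact (hUmem y hy).1⟩
    · intro a _ b _ h
      have := congrArg (fun z => z + e) h
      simpa [sub_add_cancel] using this
  have hLcard : L.card ≤ (Ω.filter (fun x => x - e ∉ Ω)).card := by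
    apply Finset.card_le_card_of_injOn (fun x => x + e)
    · intro x hx
      rw [Finset.mem_coe, Finset.mem_filter]
      refine ⟨(hLmem x hx).2, by rw [add_sub_cancel_right]; exact (hLmem x hx).1⟩
    · intro a _ b _ h
      exact add_right_cancel h
  set W := U ∪ L with hW
  have habs : |(B.card : ℝ) * s| ≤ ∑ v ∈ W, |u v| := by
    rw [tel, hW, Finset.sum_union hdisj]
    calc |∑ y ∈ U, u y - ∑ x ∈ L, u x| ≤ |∑ y ∈ U, u y| + |∑ x ∈ L, u x| := abs_sub _ _
    _ ≤ ∑ y ∈ U, |u y| + ∑ x ∈ L, |u x| :=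
        add_le_add (Finset.abs_sum_le_sum_abs _ _) (Finset.abs_sum_le_sum_abs _ _)
  have hcs : (∑ v ∈ W, |u v|)^2 ≤ (W.card : ℝ) * ∑ v ∈ W, (u v)^2 := by
    have := Finset.sum_mul_sq_le_sq_mul_sq W (fun _ => (1:ℝ)) (fun v => |u v|)
    simpa [sq_abs] using this
  have hWcard : (W.card : ℝ) ≤ (bdJcard Ω J : ℝ) := by
    have h1 := Finset.card_union_le U L
    have h2 : U.card + L.card ≤ bdJcard Ω J := add_le_add hUcard hLcard
    exact_mod_cast le_trans h1 h2
  have hWsub : W ⊆ bd := Finset.union_subset hUbd hLbd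
  have hsum : ∑ v ∈ W, (u v)^2 ≤ ∑ v ∈ bd, (u v)^2 :=
    Finset.sum_le_sum_of_subset_of_nonneg hWsub (fun v _ _ => sq_nonneg _)
  calc ((B.card : ℝ) * s)^2 = |(B.card : ℝ) * s|^2 := (sq_abs _).symm
  _ ≤ (∑ v ∈ W, |u v|)^2 := by
      apply pow_le_pow_left₀ (abs_nonneg _) habs
  _ ≤ (W.card : ℝ) * ∑ v ∈ W, (u v)^2 := hcs
  _ ≤ (bdJcard Ω J : ℝ) * ∑ v ∈ bd, (u v)^2 := by
      apply mul_le_mul hWcard hsum (Finset.sum_nonneg fun v _ => sq_nonneg _)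
        (by positivity)

lemma card_BJ_lower (hΩ : Ω.Nonempty) {J : Finset (Fin n)} (hJ : J.Nonempty) :
    Ω.card + 1 ≤ (BJ Ω J).card := by
  obtain ⟨y₀, hy₀, hmin⟩ := Finset.exists_min_image Ω (fun y => ∑ i ∈ J, y i) hΩ
  have hy : y₀ - eJ n J ∉ Ω := by
    intro h
    have h2 := hmin _ h
    have h3 : ∑ i ∈ J, (y₀ - eJ n J) i = (∑ i ∈ J, y₀ i) - J.card := by
      rw [Finset.sum_congr rfl fun i hi => show (y₀ - eJ n J) i = y₀ i - 1 by simp [eJ, hi]]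
      rw [Finset.sum_sub_distrib, Finset.sum_const, nsmul_eq_mul, mul_one]
    rw [h3] at h2
    have : 0 < (J.card : ℤ) := by exact_mod_cast Finset.card_pos.2 hJ
    omega
  have hsub : insert (y₀ - eJ n J) Ω ⊆ BJ Ω J := by
    intro z hz
    rcases Finset.mem_insert.1 hz with rfl | hz
    · exact (mem_BJ Ω).2 (Or.inr (by rw [sub_add_cancel]; exact hy₀))
    · exact (mem_BJ Ω).2 (Or.inl hz)
  calc Ω.card + 1 = (insert (y₀ - eJ n J) Ω).card := (Finset.card_insert_of_notMem hy).symm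
  _ ≤ (BJ Ω J).card := Finset.card_le_card hsub

lemma card_tessEi_le (i : Fin n) : (tessEi n Ω i).card ≤ 2 * Ω.card := by
  calc (tessEi n Ω i).card ≤ Ω.card + (Ω.image (fun x => x - eJ n {i})).card :=
        Finset.card_union_le _ _
  _ ≤ Ω.card + Ω.card := Nat.add_le_add_left (Finset.card_image_le) _
  _ = 2 * Ω.card := by ring

lemma card_tessEi_ge (i : Fin n) : Ω.card ≤ (tessEi n Ω i).card :=
  Finset.card_le_card Finset.subset_union_left

lemma iInf_le_pow_card (hn : 0 < n) (hΩ : Ω.Nonempty) {J : Finset (Fin n)} (hJ : J.Nonempty) :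
    (⨅ i : Fin n, ((tessEi n Ω i).card : ℝ)) ≤ 2^(n-1) * ((BJ Ω J).card : ℝ) := by
  have : Nonempty (Fin n) := Fin.pos_iff_nonempty.1 hn
  have hbdd : BddBelow (Set.range fun i => ((tessEi n Ω i).card : ℝ)) := by
    refine ⟨0, ?_⟩
    rintro _ ⟨i, rfl⟩
    positivity
  rcases Nat.lt_or_ge n 2 with h2 | h2
  · have hn1 : n = 1 := by omega
    have i0 : Fin n := ⟨0, hn⟩
    have hJuniv : ({i0} : Finset (Fin n)) = J := by
      obtain ⟨b, hb⟩ := hJ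
      have hss : Subsingleton (Fin n) := by rw [hn1]; infer_instance
      ext a
      simp only [Finset.mem_singleton]
      constructor
      · intro _; exact (Subsingleton.elim b a) ▸ hb
      · intro _; exact Subsingleton.elim a i0
    have heq : tessEi n Ω i0 = BJ Ω J := by rw [← hJuniv]; rfl
    calc (⨅ i : Fin n, ((tessEi n Ω i).card : ℝ)) ≤ ((tessEi n Ω i0).card : ℝ) :=
          ciInf_le hbdd i0
    _ = ((BJ Ω J).card : ℝ) := by rw [heq]
    _ ≤ 2^(n-1) * ((BJ Ω J).card : ℝ) := by
        have h1 : (1:ℝ) ≤ 2^(n-1) := one_le_pow₀ one_le_two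
        nlinarith [(Nat.cast_nonneg (BJ Ω J).card : (0:ℝ) ≤ (BJ Ω J).card)]
  · have i0 : Fin n := ⟨0, hn⟩
    have key : 2 * Ω.card ≤ 2^(n-1) * ((BJ Ω J).card) := by
      have h3 : 2 ≤ 2^(n-1) := by
        calc 2 = 2^1 := rfl
        _ ≤ 2^(n-1) := Nat.pow_le_pow_right (by norm_num) (by omega)
      calc 2 * Ω.card ≤ 2 * (Ω.card + 1) := by omega
      _ ≤ 2^(n-1) * (Ω.card + 1) := Nat.mul_le_mul_right _ h3
      _ ≤ 2^(n-1) * (BJ Ω J).card := Nat.mul_le_mul_left _ (card_BJ_lower Ω hΩ hJ)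
    calc (⨅ i : Fin n, ((tessEi n Ω i).card : ℝ)) ≤ ((tessEi n Ω i0).card : ℝ) :=
          ciInf_le hbdd i0
    _ ≤ ((2 * Ω.card : ℕ) : ℝ) := by exact_mod_cast card_tessEi_le Ω i0
    _ ≤ ((2^(n-1) * (BJ Ω J).card : ℕ) : ℝ) := by exact_mod_cast key
    _ = 2^(n-1) * ((BJ Ω J).card : ℝ) := by push_cast; ring

lemma one_le_iInf (hn : 0 < n) (hΩ : Ω.Nonempty) :
    (1:ℝ) ≤ ⨅ i : Fin n, ((tessEi n Ω i).card : ℝ) := by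
  have : Nonempty (Fin n) := Fin.pos_iff_nonempty.1 hn
  apply le_ciInf
  intro i
  have h1 : 1 ≤ (tessEi n Ω i).card := le_trans (Finset.card_pos.2 hΩ) (card_tessEi_ge Ω i)
  exact_mod_cast h1

end Infra

/-! ### Orthonormality helpers -/

section Helpers
variable {n : ℕ} (bd : Finset (Fin n → ℤ))

lemma sum_orthonormal {N : ℕ} (φ : Fin N → ((Fin n → ℤ) → ℝ))
    (horth : ∀ j l, (∑ v ∈ bd, φ j v * φ l v) = if j = l then (1 : ℝ) else 0)
    (a b : Fin N → ℝ) :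
    ∑ v ∈ bd, (∑ j, a j * φ j v) * (∑ l, b l * φ l v) = ∑ j, a j * b j := by
  have per_v : ∀ v, (∑ j, a j * φ j v) * (∑ l, b l * φ l v)
      = ∑ l, ∑ j, (a j * b l) * (φ j v * φ l v) := by
    intro v
    rw [Finset.mul_sum]
    refine Finset.sum_congr rfl fun l _ => ?_
    rw [Finset.sum_mul]
    exact Finset.sum_congr rfl fun j _ => by ring
  rw [Finset.sum_congr rfl fun v _ => per_v v, Finset.sum_comm]
  have per_l : ∀ l, ∑ v ∈ bd, ∑ j, (a j * b l) * (φ j v * φ l v) = a l * b l := by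
    intro l
    rw [Finset.sum_comm]
    have per_j : ∀ j, ∑ v ∈ bd, (a j * b l) * (φ j v * φ l v)
        = (a j * b l) * (if j = l then 1 else 0) := by
      intro j
      rw [← Finset.mul_sum, horth j l]
    rw [Finset.sum_congr rfl fun j _ => per_j j]
    simp
  exact Finset.sum_congr rfl fun l _ => per_l l

lemma sum_orthonormal_single {N : ℕ} (φ : Fin N → ((Fin n → ℤ) → ℝ))
    (horth : ∀ j l, (∑ v ∈ bd, φ j v * φ l v) = if j = l then (1 : ℝ) else 0)
    (a : Fin N → ℝ) (l : Fin N) :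
    ∑ v ∈ bd, (∑ j, a j * φ j v) * φ l v = a l := by
  have per_v : ∀ v, (∑ j, a j * φ j v) * φ l v = ∑ j, a j * (φ j v * φ l v) := by
    intro v
    rw [Finset.sum_mul]
    exact Finset.sum_congr rfl fun j _ => by ring
  rw [Finset.sum_congr rfl fun v _ => per_v v, Finset.sum_comm]
  have per_j : ∀ j, ∑ v ∈ bd, a j * (φ j v * φ l v) = a j * (if j = l then 1 else 0) := by
    intro j
    rw [← Finset.mul_sum, horth j l]
  rw [Finset.sum_congr rfl fun j _ => per_j j]
  simp

lemma exists_t (w : Fin n → ((Fin n → ℤ) → ℝ)) (K : ℕ) (hK : K < n)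
    (θ : Fin K → ((Fin n → ℤ) → ℝ)) :
    ∃ t : Fin n → ℝ, t ≠ 0 ∧
      ∀ q : Fin K, ∑ v ∈ bd, (∑ i, t i * w i v) * θ q v = 0 := by
  set L : (Fin n → ℝ) →ₗ[ℝ] (Fin K → ℝ) :=
    { toFun := fun t => fun q => ∑ v ∈ bd, (∑ i, t i * w i v) * θ q v
      map_add' := by
        intro x y
        funext q
        simp only [Pi.add_apply, add_mul, Finset.sum_add_distrib]
      map_smul' := by
        intro c x
        funext q
        simp only [Pi.smul_apply, smul_eq_mul, RingHom.id_apply, mul_assoc,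
          ← Finset.mul_sum] } with hL
  have hni : ¬ Function.Injective L := by
    intro hinj
    have h1 := LinearMap.finrank_le_finrank_of_injective hinj
    rw [Module.finrank_fintype_fun_eq_card, Module.finrank_fintype_fun_eq_card] at h1
    simp only [Fintype.card_fin] at h1
    omega
  rw [Function.not_injective_iff] at hni
  obtain ⟨a, b, hab, hne⟩ := hni
  refine ⟨a - b, sub_ne_zero.2 hne, fun q => ?_⟩
  have h2 : L (a - b) = 0 := by rw [map_sub, hab, sub_self]
  exact congrFun h2 q

end Helpers

/-! ### The key lemma -/

lemma EE_uhat {n : ℕ} (Ω : Finset (Fin n → ℤ)) {f0 : Fin n → ((Fin n → ℤ) → ℝ)}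
    (hf0 : ∀ i, f0 i ∈ LCsub Ω) (t : Fin n → ℝ) :
    EE Ω (uhat f0 t) (uhat f0 t)
      = ∑ J : Finset (Fin n), ((BJ Ω J).card : ℝ) * (∑ i ∈ J, t i)^2 := by
  unfold EE
  refine Finset.sum_congr rfl fun J _ => ?_
  rw [Finset.sum_congr rfl (fun x hx =>
    show (uhat f0 t (x + eJ n J) - uhat f0 t x) * (uhat f0 t (x + eJ n J) - uhat f0 t x)
      = (∑ i ∈ J, t i)^2 by rw [uhat_diff Ω hf0 t hx]; ring)]
  rw [Finset.sum_const, nsmul_eq_mul]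

lemma key_lemma {n : ℕ} {Ω bd : Finset (Fin n → ℤ)} (hΩ : Ω.Nonempty)
    (hbd : ∀ x, x ∈ bd ↔ x ∉ Ω ∧ ∃ y ∈ Ω, (tessGraph n).Adj x y)
    {N : ℕ} (mu : Fin N → ℝ) (φ : Fin N → ((Fin n → ℤ) → ℝ))
    (horth : ∀ j l, (∑ v ∈ bd, φ j v * φ l v) = if j = l then (1 : ℝ) else 0)
    (heig : ∀ j, ∃ f : (Fin n → ℤ) → ℝ,
      (∀ x ∈ Ω, (∑ J : Finset (Fin n),
        (2 * f x - f (x + eJ n J) - f (x - eJ n J))) = 0) ∧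
      (∀ v ∈ bd, f v = φ j v) ∧
      (∀ v ∈ bd, tessN n Ω f v = mu j * φ j v))
    (hcomp : ∀ ψ : (Fin n → ℤ) → ℝ, (∀ x, x ∉ bd → ψ x = 0) →
      (∀ j, (∑ v ∈ bd, ψ v * φ j v) = 0) →
      ∃ f : (Fin n → ℤ) → ℝ,
        (∀ x ∈ Ω, (∑ J : Finset (Fin n),
          (2 * f x - f (x + eJ n J) - f (x - eJ n J))) = 0) ∧
        (∀ v ∈ bd, f v = ψ v) ∧ (∀ v ∈ bd, tessN n Ω f v = 0))
    (f0 : Fin n → ((Fin n → ℤ) → ℝ))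
    (hf0 : ∀ i, (f0 i ∈ LCsub Ω) ∧
      ∀ g ∈ LCsub Ω, ∑ v ∈ bd, (Xc i v - f0 i v) * g v = 0)
    (t : Fin n → ℝ) (ht : t ≠ 0) :
    0 < ∑ v ∈ bd, (uhat f0 t v)^2
    ∧ ∑ v ∈ bd, (uhat f0 t v)^2 = ∑ j, (∑ v ∈ bd, uhat f0 t v * φ j v)^2
    ∧ EE Ω (uhat f0 t) (uhat f0 t)
        = ∑ j, mu j * (∑ v ∈ bd, uhat f0 t v * φ j v)^2 := by
  have hf0' : ∀ i, f0 i ∈ LCsub Ω := fun i => (hf0 i).1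
  have hharm := uhat_harmonic Ω hf0' t
  set c : Fin N → ℝ := fun j => ∑ v ∈ bd, uhat f0 t v * φ j v with hc
  set ψ : (Fin n → ℤ) → ℝ :=
    fun v => if v ∈ bd then uhat f0 t v - ∑ j, c j * φ j v else 0 with hψ
  have hψ0 : ∀ x, x ∉ bd → ψ x = 0 := fun x hx => if_neg hx
  have hψorth : ∀ l, ∑ v ∈ bd, ψ v * φ l v = 0 := by
    intro l
    have e1 : ∀ v ∈ bd, ψ v * φ l v
        = uhat f0 t v * φ l v - (∑ j, c j * φ j v) * φ l v := by
      intro v hv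
      rw [hψ]
      simp only [if_pos hv]
      ring
    rw [Finset.sum_congr rfl e1, Finset.sum_sub_distrib,
      sum_orthonormal_single bd φ horth c l]
    have hcl : ∑ v ∈ bd, uhat f0 t v * φ l v = c l := rfl
    rw [hcl]
    exact sub_self _
  obtain ⟨fw, hfw1, hfw2, hfw3⟩ := hcomp ψ hψ0 hψorth
  have hfwE : EE Ω fw fw = 0 := by
    rw [green Ω bd hbd fw fw]
    rw [Finset.sum_eq_zero fun x hx => by rw [hfw1 x hx, mul_zero],
        Finset.sum_eq_zero fun v hv => by rw [hfw3 v hv, mul_zero], add_zero]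
  have hfwLC : fw ∈ LCsub Ω := (mem_LCsub Ω).2 (diff_eq_of_EE_self_eq_zero Ω fw hfwE)
  have horthfw : ∑ v ∈ bd, uhat f0 t v * fw v = 0 := by
    have e1 : ∀ v, uhat f0 t v * fw v = ∑ i, t i * ((Xc i v - f0 i v) * fw v) := by
      intro v
      unfold uhat
      rw [Finset.sum_mul]
      exact Finset.sum_congr rfl fun i _ => by ring
    rw [Finset.sum_congr rfl fun v _ => e1 v, Finset.sum_comm]
    refine Finset.sum_eq_zero fun i _ => ?_
    rw [← Finset.mul_sum, (hf0 i).2 fw hfwLC, mul_zero]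
  have hwbd : ∀ v ∈ bd, fw v = uhat f0 t v - ∑ j, c j * φ j v := by
    intro v hv
    rw [hfw2 v hv, hψ]
    simp only [if_pos hv]
  have hcross : ∑ v ∈ bd, uhat f0 t v * ∑ j, c j * φ j v = ∑ j, c j * c j := by
    have e2 : ∀ v, uhat f0 t v * ∑ j, c j * φ j v
        = ∑ j, c j * (uhat f0 t v * φ j v) := by
      intro v
      rw [Finset.mul_sum]
      exact Finset.sum_congr rfl fun j _ => by ring
    rw [Finset.sum_congr rfl fun v _ => e2 v, Finset.sum_comm]
    refine Finset.sum_congr rfl fun j _ => ?_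
    rw [← Finset.mul_sum]
  have hK1 : ∑ v ∈ bd, (uhat f0 t v)^2 = ∑ j, (c j)^2 := by
    have h0 : (0:ℝ) = ∑ v ∈ bd, uhat f0 t v * (uhat f0 t v - ∑ j, c j * φ j v) := by
      rw [← horthfw]
      exact Finset.sum_congr rfl fun v hv => by rw [hwbd v hv]
    have h1 : ∑ v ∈ bd, uhat f0 t v * (uhat f0 t v - ∑ j, c j * φ j v)
        = (∑ v ∈ bd, (uhat f0 t v)^2) - ∑ j, c j * c j := by
      rw [Finset.sum_congr rfl (fun v _ =>
        show uhat f0 t v * (uhat f0 t v - ∑ j, c j * φ j v)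
          = (uhat f0 t v)^2 - uhat f0 t v * ∑ j, c j * φ j v by ring)]
      rw [Finset.sum_sub_distrib, hcross]
    rw [h1] at h0
    have : ∑ v ∈ bd, (uhat f0 t v)^2 = ∑ j, c j * c j := by linarith
    rw [this]
    exact Finset.sum_congr rfl fun j _ => by ring
  have hfw0 : ∀ v ∈ bd, fw v = 0 := by
    have hsq : ∑ v ∈ bd, (fw v)^2 = 0 := by
      have e3 : ∀ v ∈ bd, (fw v)^2
          = fw v * uhat f0 t v - ∑ j, c j * (fw v * φ j v) := by
        intro v hv
        rw [pow_two]
        nth_rewrite 2 [hwbd v hv]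
        rw [mul_sub, Finset.mul_sum]
        congr 1
        exact Finset.sum_congr rfl fun j _ => by ring
      rw [Finset.sum_congr rfl e3, Finset.sum_sub_distrib]
      have hfu : ∑ v ∈ bd, fw v * uhat f0 t v = 0 := by
        rw [← horthfw]
        exact Finset.sum_congr rfl fun v _ => by ring
      have hfφ : ∑ v ∈ bd, ∑ j, c j * (fw v * φ j v) = 0 := by
        rw [Finset.sum_comm]
        refine Finset.sum_eq_zero fun j _ => ?_
        rw [← Finset.mul_sum]
        have : ∑ v ∈ bd, fw v * φ j v = 0 := by
          rw [← hψorth j]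
          exact Finset.sum_congr rfl fun v hv => by rw [hfw2 v hv]
        rw [this, mul_zero]
      rw [hfu, hfφ, sub_zero]
    intro v hv
    have := (Finset.sum_eq_zero_iff_of_nonneg (fun v _ => sq_nonneg (fw v))).1 hsq v hv
    exact pow_eq_zero_iff (two_ne_zero) |>.1 this
  have hubd : ∀ v ∈ bd, uhat f0 t v = ∑ j, c j * φ j v := by
    intro v hv
    have h := hwbd v hv
    rw [hfw0 v hv] at h
    linarith
  -- positivity
  have hK2 : 0 < ∑ v ∈ bd, (uhat f0 t v)^2 := by
    rcases (Finset.sum_nonneg fun v (_ : v ∈ bd) => sq_nonneg (uhat f0 t v)).lt_or_eq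
      with h | h
    · exact h
    · exfalso
      have hub0 : ∀ v ∈ bd, uhat f0 t v = 0 := by
        intro v hv
        have := (Finset.sum_eq_zero_iff_of_nonneg
          (fun v _ => sq_nonneg (uhat f0 t v))).1 h.symm v hv
        exact pow_eq_zero_iff (two_ne_zero) |>.1 this
      have hE0 : EE Ω (uhat f0 t) (uhat f0 t) = 0 := by
        rw [green Ω bd hbd (uhat f0 t) (uhat f0 t)]
        rw [Finset.sum_eq_zero fun x hx => by rw [hharm x hx, mul_zero],
            Finset.sum_eq_zero fun v hv => by rw [hub0 v hv, zero_mul], add_zero]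
      rw [EE_uhat Ω hf0' t] at hE0
      have hterm := (Finset.sum_eq_zero_iff_of_nonneg
        (fun J _ => by positivity)).1 hE0
      apply ht
      funext i
      have h3 := hterm {i} (Finset.mem_univ _)
      have hcard : (0:ℝ) < ((BJ Ω {i}).card : ℝ) := by
        have : 0 < (BJ Ω {i}).card :=
          Finset.card_pos.2 ⟨hΩ.choose, Omega_subset_BJ Ω hΩ.choose_spec⟩
        exact_mod_cast this
      have h4 : (∑ i' ∈ ({i} : Finset (Fin n)), t i')^2 = 0 := by
        rcases mul_eq_zero.1 h3 with h | h
        · exact absurd h (ne_of_gt hcard)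
        · exact h
      rw [Finset.sum_singleton] at h4
      have := pow_eq_zero_iff (two_ne_zero) |>.1 h4
      simpa using this
  -- the energy identity
  choose F hF1 hF2 hF3 using heig
  set Fc : (Fin n → ℤ) → ℝ := fun v => ∑ j, c j * F j v with hFc
  have hFharm : ∀ x ∈ Ω, (∑ J : Finset (Fin n),
      (2 * Fc x - Fc (x + eJ n J) - Fc (x - eJ n J))) = 0 := by
    intro x hx
    rw [hFc]
    rw [lapsum_sum c F x]
    exact Finset.sum_eq_zero fun j _ => by rw [hF1 j x hx, mul_zero]
  have hFcbd : ∀ v ∈ bd, Fc v = ∑ j, c j * φ j v := by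
    intro v hv
    rw [hFc]
    exact Finset.sum_congr rfl fun j _ => by rw [hF2 j v hv]
  have hdiffE : EE Ω (fun v => uhat f0 t v - Fc v) (fun v => uhat f0 t v - Fc v) = 0 := by
    rw [green Ω bd hbd (fun v => uhat f0 t v - Fc v) (fun v => uhat f0 t v - Fc v)]
    have hz1 : ∀ x ∈ Ω, (∑ J : Finset (Fin n),
        (2 * (uhat f0 t x - Fc x) - (uhat f0 t (x + eJ n J) - Fc (x + eJ n J))
          - (uhat f0 t (x - eJ n J) - Fc (x - eJ n J)))) = 0 := by
      intro x hx
      rw [lapsum_sub (uhat f0 t) Fc x, hharm x hx, hFharm x hx, sub_zero]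
    have hz2 : ∀ v ∈ bd, uhat f0 t v - Fc v = 0 := by
      intro v hv
      rw [hubd v hv, hFcbd v hv, sub_self]
    rw [Finset.sum_eq_zero fun x hx => by rw [hz1 x hx, mul_zero],
        Finset.sum_eq_zero fun v hv => by rw [hz2 v hv, zero_mul], add_zero]
  have hdiffLC := diff_eq_of_EE_self_eq_zero Ω _ hdiffE
  have hEeq : EE Ω (uhat f0 t) (uhat f0 t) = EE Ω Fc Fc := by
    unfold EE
    refine Finset.sum_congr rfl fun J _ => Finset.sum_congr rfl fun x hx => ?_
    have h4 : uhat f0 t (x + eJ n J) - Fc (x + eJ n J) = uhat f0 t x - Fc x :=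
      hdiffLC J x hx
    have h5 : uhat f0 t (x + eJ n J) - uhat f0 t x = Fc (x + eJ n J) - Fc x := by
      linarith
    rw [h5]
  have hEF : EE Ω Fc Fc = ∑ j, mu j * (c j)^2 := by
    rw [green Ω bd hbd Fc Fc]
    rw [Finset.sum_eq_zero fun x hx => by rw [hFharm x hx, mul_zero], zero_add]
    have e3 : ∀ v ∈ bd, Fc v * tessN n Ω Fc v
        = (∑ j, c j * φ j v) * (∑ l, (c l * mu l) * φ l v) := by
      intro v hv
      have hNv : tessN n Ω Fc v = ∑ l, (c l * mu l) * φ l v := by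
        rw [hFc, tessN_sum Ω c F v]
        exact Finset.sum_congr rfl fun l _ => by rw [hF3 l v hv]; ring
      rw [hFcbd v hv, hNv]
    rw [Finset.sum_congr rfl e3, sum_orthonormal bd φ horth c (fun l => c l * mu l)]
    exact Finset.sum_congr rfl fun j _ => by ring
  exact ⟨hK2, hK1, hEeq.trans hEF⟩

/-- for a nonempty finite subset `Ω` of `ℤⁿ` in the standard tessellation
graph of `ℝⁿ` with unit weights, the first `n` positive Steklov eigenvalues satisfy
`λ₁ + ⋯ + λ_n ≤ n·2^{n-1}|∂Ω| / minᵢ |Eᵢ(Ω̃)|`. -/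
theorem steklov_sum_tessellation (n : ℕ) (hn : 0 < n) (Ω : Finset (Fin n → ℤ))
    (hΩ : Ω.Nonempty) (bd : Finset (Fin n → ℤ))
    (hbd : ∀ x, x ∈ bd ↔ x ∉ Ω ∧ ∃ y ∈ Ω, (tessGraph n).Adj x y)
    (N : ℕ) (mu : Fin N → ℝ) (φ : Fin N → ((Fin n → ℤ) → ℝ))
    (hmono : Monotone mu) (hpos : ∀ j, 0 < mu j)
    (hsupp : ∀ j, ∀ x, x ∉ bd → φ j x = 0)
    (horth : ∀ j l, (∑ v ∈ bd, φ j v * φ l v) = if j = l then (1 : ℝ) else 0)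
    (heig : ∀ j, ∃ f : (Fin n → ℤ) → ℝ,
      (∀ x ∈ Ω, (∑ J : Finset (Fin n),
        (2 * f x - f (x + eJ n J) - f (x - eJ n J))) = 0) ∧
      (∀ v ∈ bd, f v = φ j v) ∧
      (∀ v ∈ bd, tessN n Ω f v = mu j * φ j v))
    (hcomp : ∀ ψ : (Fin n → ℤ) → ℝ, (∀ x, x ∉ bd → ψ x = 0) →
      (∀ j, (∑ v ∈ bd, ψ v * φ j v) = 0) →
      ∃ f : (Fin n → ℤ) → ℝ,
        (∀ x ∈ Ω, (∑ J : Finset (Fin n),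
          (2 * f x - f (x + eJ n J) - f (x - eJ n J))) = 0) ∧
        (∀ v ∈ bd, f v = ψ v) ∧ (∀ v ∈ bd, tessN n Ω f v = 0)) :
    ∃ h : n ≤ N,
      (∑ i : Fin n, mu (Fin.castLE h i)) ≤
        (n : ℝ) * 2 ^ (n - 1) * (tessBdryEdges n Ω : ℝ) /
          ⨅ i : Fin n, ((tessEi n Ω i).card : ℝ) := by
  obtain ⟨f0, hf0⟩ := exists_f0 Ω bd
  have hf0' : ∀ i, f0 i ∈ LCsub Ω := fun i => (hf0 i).1
  -- first, n ≤ N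
  have hnN : n ≤ N := by
    by_contra hcon
    push_neg at hcon
    obtain ⟨t, ht, hto⟩ := exists_t bd (fun i v => Xc i v - f0 i v) N hcon φ
    obtain ⟨hK2, hK1, _⟩ := key_lemma hΩ hbd mu φ horth heig hcomp f0 hf0 t ht
    have hz : ∑ v ∈ bd, (uhat f0 t v)^2 = 0 := by
      rw [hK1]
      refine Finset.sum_eq_zero fun j _ => ?_
      have := hto j
      have h2 : ∑ v ∈ bd, uhat f0 t v * φ j v = 0 := this
      rw [h2]
      ring
    rw [hz] at hK2
    exact lt_irrefl 0 hK2
  refine ⟨hnN, ?_⟩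
  have hnNlt : ∀ k : Fin n, (k : ℕ) < N := fun k => lt_of_lt_of_le k.isLt hnN
  set m := ⨅ i : Fin n, ((tessEi n Ω i).card : ℝ) with hmdef
  have hm1 : (1:ℝ) ≤ m := one_le_iInf Ω hn hΩ
  have hm0 : (0:ℝ) < m := lt_of_lt_of_le one_pos hm1
  have hbound : ∀ k : Fin n,
      mu (Fin.castLE hnN k) ≤ 2^(n-1) * (tessBdryEdges n Ω : ℝ) / m := by
    intro k
    obtain ⟨t, ht, hto⟩ := exists_t bd (fun i v => Xc i v - f0 i v) (k : ℕ) k.isLt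
      (fun q => φ ⟨(q : ℕ), lt_trans q.isLt (hnNlt k)⟩)
    obtain ⟨hK2, hK1, hK3⟩ := key_lemma hΩ hbd mu φ horth heig hcomp f0 hf0 t ht
    have hc0 : ∀ j : Fin N, (j : ℕ) < (k : ℕ) →
        ∑ v ∈ bd, uhat f0 t v * φ j v = 0 := by
      intro j hj
      have h5 := hto ⟨(j : ℕ), hj⟩
      have h6 : (⟨(j : ℕ), lt_trans hj (hnNlt k)⟩ : Fin N) = j := Fin.ext rfl
      rw [h6] at h5
      exact h5
    -- lower bound on the energy
    have hmuD : mu (Fin.castLE hnN k) * (∑ v ∈ bd, (uhat f0 t v)^2)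
        ≤ EE Ω (uhat f0 t) (uhat f0 t) := by
      calc mu (Fin.castLE hnN k) * (∑ v ∈ bd, (uhat f0 t v)^2)
          = ∑ j, mu (Fin.castLE hnN k) * (∑ v ∈ bd, uhat f0 t v * φ j v)^2 := by
            rw [hK1, Finset.mul_sum]
      _ ≤ ∑ j, mu j * (∑ v ∈ bd, uhat f0 t v * φ j v)^2 := by
            refine Finset.sum_le_sum fun j _ => ?_
            by_cases hj : (j : ℕ) < (k : ℕ)
            · rw [hc0 j hj]
              simp
            · refine mul_le_mul_of_nonneg_right ?_ (sq_nonneg _)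
              refine hmono ?_
              rw [Fin.le_def]
              simpa using le_of_not_gt hj
      _ = EE Ω (uhat f0 t) (uhat f0 t) := hK3.symm
    -- upper bound on the energy
    have hEub : m * EE Ω (uhat f0 t) (uhat f0 t)
        ≤ 2^(n-1) * (tessBdryEdges n Ω : ℝ) * (∑ v ∈ bd, (uhat f0 t v)^2) := by
      have hDnn : (0:ℝ) ≤ ∑ v ∈ bd, (uhat f0 t v)^2 :=
        Finset.sum_nonneg fun v _ => sq_nonneg _
      rw [EE_uhat Ω hf0' t, Finset.mul_sum]
      have perJ : ∀ J : Finset (Fin n),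
          m * (((BJ Ω J).card : ℝ) * (∑ i ∈ J, t i)^2)
          ≤ 2^(n-1) * ((bdJcard Ω J : ℝ) * (∑ v ∈ bd, (uhat f0 t v)^2)) := by
        intro J
        rcases J.eq_empty_or_nonempty with rfl | hJ
        · simp only [Finset.sum_empty, ne_eq, OfNat.ofNat_ne_zero, not_false_eq_true,
            zero_pow, mul_zero]
          positivity
        · calc m * (((BJ Ω J).card : ℝ) * (∑ i ∈ J, t i)^2)
              ≤ (2^(n-1) * ((BJ Ω J).card : ℝ)) * (((BJ Ω J).card : ℝ) * (∑ i ∈ J, t i)^2) := by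
                refine mul_le_mul_of_nonneg_right ?_ (by positivity)
                exact iInf_le_pow_card Ω hn hΩ hJ
          _ = 2^(n-1) * ((((BJ Ω J).card : ℝ) * (∑ i ∈ J, t i))^2) := by ring
          _ ≤ 2^(n-1) * ((bdJcard Ω J : ℝ) * (∑ v ∈ bd, (uhat f0 t v)^2)) := by
                refine mul_le_mul_of_nonneg_left ?_ (by positivity)
                exact core_estimate Ω bd hbd hJ (uhat f0 t) (∑ i ∈ J, t i)
                  (fun x hx => uhat_diff Ω hf0' t hx)
      calc ∑ J : Finset (Fin n), m * (((BJ Ω J).card : ℝ) * (∑ i ∈ J, t i)^2)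
          ≤ ∑ J : Finset (Fin n),
              2^(n-1) * ((bdJcard Ω J : ℝ) * (∑ v ∈ bd, (uhat f0 t v)^2)) :=
            Finset.sum_le_sum fun J _ => perJ J
      _ = 2^(n-1) * (tessBdryEdges n Ω : ℝ) * (∑ v ∈ bd, (uhat f0 t v)^2) := by
            rw [← Finset.mul_sum, ← Finset.sum_mul]
            have : ∑ J : Finset (Fin n), (bdJcard Ω J : ℝ) = (tessBdryEdges n Ω : ℝ) := by
              rw [← sum_bdJcard Ω]
              push_cast
              ring
            rw [this]
            ring
    -- combine
    have hfinal : (mu (Fin.castLE hnN k) * m) * (∑ v ∈ bd, (uhat f0 t v)^2)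
        ≤ (2^(n-1) * (tessBdryEdges n Ω : ℝ)) * (∑ v ∈ bd, (uhat f0 t v)^2) := by
      calc (mu (Fin.castLE hnN k) * m) * (∑ v ∈ bd, (uhat f0 t v)^2)
          = m * (mu (Fin.castLE hnN k) * (∑ v ∈ bd, (uhat f0 t v)^2)) := by ring
      _ ≤ m * EE Ω (uhat f0 t) (uhat f0 t) :=
            mul_le_mul_of_nonneg_left hmuD (le_of_lt hm0)
      _ ≤ 2^(n-1) * (tessBdryEdges n Ω : ℝ) * (∑ v ∈ bd, (uhat f0 t v)^2) := hEub
      _ = (2^(n-1) * (tessBdryEdges n Ω : ℝ)) * (∑ v ∈ bd, (uhat f0 t v)^2) := by ring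
    have hmm : mu (Fin.castLE hnN k) * m ≤ 2^(n-1) * (tessBdryEdges n Ω : ℝ) :=
      le_of_mul_le_mul_right hfinal hK2
    rw [le_div_iff₀ hm0]
    exact hmm
  calc ∑ i : Fin n, mu (Fin.castLE hnN i)
      ≤ ∑ _i : Fin n, 2^(n-1) * (tessBdryEdges n Ω : ℝ) / m :=
        Finset.sum_le_sum fun i _ => hbound i
  _ = (n : ℝ) * (2^(n-1) * (tessBdryEdges n Ω : ℝ) / m) := by
      rw [Finset.sum_const, Finset.card_univ, Fintype.card_fin, nsmul_eq_mul]
  _ = (n : ℝ) * 2 ^ (n - 1) * (tessBdryEdges n Ω : ℝ) / m := by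
      ring

end GraphHodge
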